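/- There exists a universal constant c > 0 such that for all smooth ℤ³-periodic functions ξ, φ : ℝ³ → ℝ³, the commutator of the (componentwise) Laplacian Δ with the operator B_ξ := L_ξ + T_ξ is of second order: ‖Δ(B_ξ φ) − B_ξ(Δφ)‖_{L²} ≤ c ‖ξ‖_{W^{3,∞}} ‖φ‖_{W^{2,2}}. -/

import Mathlib

open MeasureTheory

noncomputable def pd (j : Fin 3) (f : (Fin 3 → ℝ) → (Fin 3 → ℝ)) :
    (Fin 3 → ℝ) → (Fin 3 → ℝ) :=
  fun x => fderiv ℝ f x (Pi.single j 1)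

def Periodic3 (f : (Fin 3 → ℝ) → (Fin 3 → ℝ)) : Prop :=
  ∀ (x : Fin 3 → ℝ) (z : Fin 3 → ℤ), f (x + fun i => (z i : ℝ)) = f x

noncomputable def transport (φ ψ : (Fin 3 → ℝ) → (Fin 3 → ℝ)) :
    (Fin 3 → ℝ) → (Fin 3 → ℝ) :=
  fun x i => ∑ j, φ x j * pd j ψ x i

noncomputable def mderiv (α : Fin 3 → ℕ) (f : (Fin 3 → ℝ) → (Fin 3 → ℝ)) :
    (Fin 3 → ℝ) → (Fin 3 → ℝ) :=
  (pd 0)^[α 0] ((pd 1)^[α 1] ((pd 2)^[α 2] f))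

def midx (k : ℕ) : Finset (Fin 3 → ℕ) :=
  (Finset.Iic (fun _ => k : Fin 3 → ℕ)).filter (fun α => α 0 + α 1 + α 2 ≤ k)

lemma midx_nonempty (k : ℕ) : (midx k).Nonempty :=
  ⟨fun _ => 0, by simp [midx, Finset.mem_filter, Finset.mem_Iic, Pi.le_def]⟩

noncomputable def sobSq (k : ℕ) (f : (Fin 3 → ℝ) → (Fin 3 → ℝ)) : ℝ :=
  ∑ α ∈ midx k, ∫ x in Set.Icc (0 : Fin 3 → ℝ) 1, ∑ i, (mderiv α f x i) ^ 2

noncomputable def wNorm2 (k : ℕ) (f : (Fin 3 → ℝ) → (Fin 3 → ℝ)) : ℝ :=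
  Real.sqrt (sobSq k f)

noncomputable def wInf (k : ℕ) (f : (Fin 3 → ℝ) → (Fin 3 → ℝ)) : ℝ :=
  (midx k).sup' (midx_nonempty k)
    (fun α => ⨆ x : Fin 3 → ℝ, Real.sqrt (∑ i, (mderiv α f x i) ^ 2))


noncomputable def tOp (φ ψ : (Fin 3 → ℝ) → (Fin 3 → ℝ)) :
    (Fin 3 → ℝ) → (Fin 3 → ℝ) :=
  fun x i => ∑ j, ψ x j * pd i φ x j

noncomputable def bOp (ξ u : (Fin 3 → ℝ) → (Fin 3 → ℝ)) :
    (Fin 3 → ℝ) → (Fin 3 → ℝ) :=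
  fun x => transport ξ u x + tOp ξ u x

noncomputable def lap (f : (Fin 3 → ℝ) → (Fin 3 → ℝ)) :
    (Fin 3 → ℝ) → (Fin 3 → ℝ) :=
  fun x => ∑ j, pd j (pd j f) x

/- ===== auxiliary development ===== -/

noncomputable def D (j : Fin 3) (g : (Fin 3 → ℝ) → ℝ) : (Fin 3 → ℝ) → ℝ :=
  fun x => fderiv ℝ g x (Pi.single j 1)

lemma one_le_inf : ((⊤:ℕ∞) : WithTop ℕ∞) ≠ 0 := by simp
lemma two_le_inf : (2 : WithTop ℕ∞) ≤ ((⊤:ℕ∞) : WithTop ℕ∞) := by norm_cast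

lemma D_smooth {g : (Fin 3 → ℝ) → ℝ} (hg : ContDiff ℝ (⊤:ℕ∞) g) (j : Fin 3) :
    ContDiff ℝ (⊤:ℕ∞) (D j g) :=
  ((contDiff_infty_iff_fderiv.mp hg).2.clm_apply contDiff_const)

lemma D_mul {a b : (Fin 3 → ℝ) → ℝ} (ha : ContDiff ℝ (⊤:ℕ∞) a) (hb : ContDiff ℝ (⊤:ℕ∞) b)
    (j : Fin 3) (x : Fin 3 → ℝ) :
    D j (fun y => a y * b y) x = D j a x * b x + a x * D j b x := by
  have := fderiv_fun_mul (ha.differentiable one_le_inf x) (hb.differentiable one_le_inf x)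
  simp only [D, this, ContinuousLinearMap.add_apply, ContinuousLinearMap.smul_apply, smul_eq_mul]
  ring

lemma D_add {a b : (Fin 3 → ℝ) → ℝ} (ha : ContDiff ℝ (⊤:ℕ∞) a) (hb : ContDiff ℝ (⊤:ℕ∞) b)
    (j : Fin 3) (x : Fin 3 → ℝ) :
    D j (fun y => a y + b y) x = D j a x + D j b x := by
  have := fderiv_fun_add (𝕜 := ℝ) (ha.differentiable one_le_inf x) (hb.differentiable one_le_inf x)
  simp [D, this]

lemma D_sum {ι : Type*} (s : Finset ι) (g : ι → (Fin 3 → ℝ) → ℝ)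
    (hg : ∀ i ∈ s, ContDiff ℝ (⊤:ℕ∞) (g i)) (j : Fin 3) (x : Fin 3 → ℝ) :
    D j (fun y => ∑ i ∈ s, g i y) x = ∑ i ∈ s, D j (g i) x := by
  have := fderiv_fun_sum (u := s) (A := g) (x := x)
    (fun i hi => ((hg i hi).differentiable one_le_inf x))
  simp [D, this]

lemma D_swap {g : (Fin 3 → ℝ) → ℝ} (hg : ContDiff ℝ (⊤:ℕ∞) g) (j k : Fin 3) :
    D j (D k g) = D k (D j g) := by
  funext x
  have hsymm : IsSymmSndFDerivAt ℝ g x :=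
    (hg.contDiffAt).isSymmSndFDerivAt
      (by rw [minSmoothness_of_isRCLikeNormedField]; exact two_le_inf)
  have hdf : ∀ v : Fin 3 → ℝ, ∀ y, fderiv ℝ (fun z => fderiv ℝ g z v) y
      = (fderiv ℝ (fderiv ℝ g) y).flip v := by
    intro v y
    have hc : DifferentiableAt ℝ (fderiv ℝ g) y :=
      ((contDiff_infty_iff_fderiv.mp hg).2.differentiable one_le_inf) y
    rw [fderiv_clm_apply (𝕜 := ℝ) hc (differentiableAt_const v)]
    ext w
    simp
  show fderiv ℝ (fun z => fderiv ℝ g z (Pi.single k 1)) x (Pi.single j 1)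
      = fderiv ℝ (fun z => fderiv ℝ g z (Pi.single j 1)) x (Pi.single k 1)
  rw [hdf, hdf]
  simpa using hsymm (Pi.single j 1) (Pi.single k 1)

lemma D_swap3 {g : (Fin 3 → ℝ) → ℝ} (hg : ContDiff ℝ (⊤:ℕ∞) g) (k i : Fin 3) :
    D k (D k (D i g)) = D i (D k (D k g)) := by
  rw [D_swap hg k i, D_swap (D_smooth hg k) k i]

lemma pd_contDiff {f} (hf : ContDiff ℝ (⊤:ℕ∞) f) (j : Fin 3) :
    ContDiff ℝ (⊤:ℕ∞) (pd j f) :=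
  ((contDiff_infty_iff_fderiv.mp hf).2.clm_apply contDiff_const)

lemma pd_comp {f} (hf : ContDiff ℝ (⊤:ℕ∞) f) (j : Fin 3) (x : Fin 3 → ℝ) (i : Fin 3) :
    pd j f x i = D j (fun y => f y i) x := by
  have h : ∀ m, DifferentiableAt ℝ (fun y => f y m) x := fun m =>
    ((contDiff_pi.mp hf m).differentiable one_le_inf) x
  have hpi : fderiv ℝ f x = ContinuousLinearMap.pi fun m => fderiv ℝ (fun y => f y m) x :=
    fderiv_pi (𝕜 := ℝ) (φ := fun m y => f y m) (x := x) h
  simp [pd, D, hpi]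

lemma pdD {f} (hf : ContDiff ℝ (⊤:ℕ∞) f) (j i : Fin 3) :
    (fun x => pd j f x i) = D j (fun y => f y i) :=
  funext fun x => pd_comp hf j x i

lemma pd2_comp {f} (hf : ContDiff ℝ (⊤:ℕ∞) f) (j k : Fin 3) (x : Fin 3 → ℝ) (i : Fin 3) :
    pd j (pd k f) x i = D j (D k (fun y => f y i)) x := by
  rw [pd_comp (pd_contDiff hf k) j x i]
  exact congrFun (congrArg (D j) (pdD hf k i)) x

lemma pd3_comp {f} (hf : ContDiff ℝ (⊤:ℕ∞) f) (a b c : Fin 3) (x : Fin 3 → ℝ) (i : Fin 3) :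
    pd a (pd b (pd c f)) x i = D a (D b (D c (fun y => f y i))) x := by
  rw [pd2_comp (pd_contDiff hf c) a b x i]
  rw [pdD hf c i]

lemma pd_periodic {f} (hf : ContDiff ℝ (⊤:ℕ∞) f) (hp : Periodic3 f) (j : Fin 3) :
    Periodic3 (pd j f) := by
  intro x z
  have key : fderiv ℝ f (x + fun i => (z i : ℝ)) = fderiv ℝ f x := by
    set c : Fin 3 → ℝ := fun i => (z i : ℝ) with hc
    have h1 : (fun y => f (y + c)) = f := funext fun y => hp y z
    have hdf : HasFDerivAt f (fderiv ℝ f (x + c)) (x + c) :=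
      (hf.differentiable one_le_inf _).hasFDerivAt
    have hA : HasFDerivAt (fun y : Fin 3 → ℝ => y + c) (ContinuousLinearMap.id ℝ _) x :=
      (hasFDerivAt_id x).add_const c
    have h2 : HasFDerivAt (fun y => f (y + c)) (fderiv ℝ f (x + c)) x := by
      simpa using hdf.comp x hA
    rw [h1] at h2
    exact h2.fderiv.symm
  simp only [pd, key]

lemma iter_pres (j : Fin 3) (n : ℕ) {f} (hf : ContDiff ℝ (⊤:ℕ∞) f) (hp : Periodic3 f) :
    ContDiff ℝ (⊤:ℕ∞) ((pd j)^[n] f) ∧ Periodic3 ((pd j)^[n] f) := by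
  induction n generalizing f with
  | zero => exact ⟨hf, hp⟩
  | succ n ih =>
    rw [Function.iterate_succ_apply]
    exact ih (pd_contDiff hf j) (pd_periodic hf hp j)

lemma iter_smooth (j : Fin 3) (n : ℕ) {f} (hf : ContDiff ℝ (⊤:ℕ∞) f) :
    ContDiff ℝ (⊤:ℕ∞) ((pd j)^[n] f) := by
  induction n generalizing f with
  | zero => exact hf
  | succ n ih => rw [Function.iterate_succ_apply]; exact ih (pd_contDiff hf j)

lemma mderiv_smooth {f} (hf : ContDiff ℝ (⊤:ℕ∞) f) (α : Fin 3 → ℕ) :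
    ContDiff ℝ (⊤:ℕ∞) (mderiv α f) :=
  iter_smooth _ _ (iter_smooth _ _ (iter_smooth _ _ hf))

lemma mderiv_periodic {f} (hf : ContDiff ℝ (⊤:ℕ∞) f) (hp : Periodic3 f) (α : Fin 3 → ℕ) :
    Periodic3 (mderiv α f) :=
  (iter_pres _ _ (iter_pres _ _ (iter_pres _ _ hf hp).1 (iter_pres _ _ hf hp).2).1
    (iter_pres _ _ (iter_pres _ _ hf hp).1 (iter_pres _ _ hf hp).2).2).2

lemma mderiv_single {f} (j : Fin 3) : mderiv (Pi.single j 1) f = pd j f := by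
  fin_cases j <;> rfl

lemma mderiv_pair {f} (j k : Fin 3) (h : j ≤ k) :
    mderiv (Pi.single j 1 + Pi.single k 1) f = pd j (pd k f) := by
  fin_cases j <;> fin_cases k <;> first | rfl | exact absurd h (by decide)

lemma mderiv_triple {f} (a b c : Fin 3) (hab : a ≤ b) (hbc : b ≤ c) :
    mderiv (Pi.single a 1 + Pi.single b 1 + Pi.single c 1) f = pd a (pd b (pd c f)) := by
  fin_cases a <;> fin_cases b <;> fin_cases c <;>
    first | rfl | exact absurd hab (by decide) | exact absurd hbc (by decide)

lemma mem_midx_of (α : Fin 3 → ℕ) (k : ℕ) (h1 : α 0 + α 1 + α 2 ≤ k) : α ∈ midx k := by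
  simp only [midx, Finset.mem_filter, Finset.mem_Iic, Pi.le_def]
  refine ⟨fun i => ?_, h1⟩
  have h0 : α 0 ≤ k := by omega
  have ha1 : α 1 ≤ k := by omega
  have ha2 : α 2 ≤ k := by omega
  fin_cases i
  · exact h0
  · exact ha1
  · exact ha2

lemma single_sum (a : Fin 3) :
    (Pi.single a 1 : Fin 3 → ℕ) 0 + (Pi.single a 1 : Fin 3 → ℕ) 1
      + (Pi.single a 1 : Fin 3 → ℕ) 2 = 1 := by
  fin_cases a <;> simp

lemma zero_mem_midx (k : ℕ) : (fun _ => 0 : Fin 3 → ℕ) ∈ midx k :=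
  mem_midx_of _ _ (by simp)

lemma single_mem_midx (a : Fin 3) (k : ℕ) (hk : 1 ≤ k) : (Pi.single a 1 : Fin 3 → ℕ) ∈ midx k :=
  mem_midx_of _ _ (by have := single_sum a; omega)

lemma pair_mem_midx (a b : Fin 3) (k : ℕ) (hk : 2 ≤ k) :
    (Pi.single a 1 + Pi.single b 1 : Fin 3 → ℕ) ∈ midx k := by
  refine mem_midx_of _ _ ?_
  have := single_sum a; have := single_sum b
  simp only [Pi.add_apply]; omega

lemma triple_mem_midx (a b c : Fin 3) :
    (Pi.single a 1 + Pi.single b 1 + Pi.single c 1 : Fin 3 → ℕ) ∈ midx 3 := by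
  refine mem_midx_of _ _ ?_
  have := single_sum a; have := single_sum b; have := single_sum c
  simp only [Pi.add_apply]; omega

lemma midx_zero : midx 0 = {(fun _ => 0 : Fin 3 → ℕ)} := by
  ext α
  simp only [midx, Finset.mem_filter, Finset.mem_Iic, Pi.le_def, Finset.mem_singleton]
  constructor
  · rintro ⟨h1, -⟩
    funext i
    exact Nat.le_zero.mp (h1 i)
  · rintro rfl
    simp

lemma wInf_nonneg (k : ℕ) (f : (Fin 3 → ℝ) → (Fin 3 → ℝ)) : 0 ≤ wInf k f := by
  refine le_trans ?_ (Finset.le_sup' _ (zero_mem_midx k))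
  exact Real.iSup_nonneg fun x => Real.sqrt_nonneg _

lemma abs_mderiv_le_wInf {f} (hf : ContDiff ℝ (⊤:ℕ∞) f) (hp : Periodic3 f) {k : ℕ}
    {α : Fin 3 → ℕ} (hα : α ∈ midx k) (x : Fin 3 → ℝ) (m : Fin 3) :
    |mderiv α f x m| ≤ wInf k f := by
  have hsm := mderiv_smooth hf α
  have hper := mderiv_periodic hf hp α
  set H : (Fin 3 → ℝ) → ℝ := fun y => Real.sqrt (∑ i, (mderiv α f y i)^2) with hH
  have hHcont : Continuous H := by
    have hc : Continuous (mderiv α f) := hsm.continuous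
    exact Real.continuous_sqrt.comp
      (continuous_finset_sum _ fun i _ => ((continuous_apply i).comp hc).pow 2)
  have hbdd : BddAbove (Set.range H) := by
    have himg : BddAbove (H '' Set.Icc 0 1) := (isCompact_Icc.image hHcont).bddAbove
    refine BddAbove.mono ?_ himg
    rintro _ ⟨y, rfl⟩
    refine ⟨fun i => Int.fract (y i),
      ⟨fun i => Int.fract_nonneg _, fun i => (Int.fract_lt_one _).le⟩, ?_⟩
    have hy : (fun i => Int.fract (y i)) + (fun i => ((⌊y i⌋ : ℤ) : ℝ)) = y := by
      funext i; simp only [Pi.add_apply]; exact Int.fract_add_floor (y i)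
    have hper' := hper (fun i => Int.fract (y i)) (fun i => ⌊y i⌋)
    show H _ = H y
    conv_rhs => rw [← hy]
    exact (congrArg (fun v : Fin 3 → ℝ => Real.sqrt (∑ i, (v i)^2)) hper').symm
  calc |mderiv α f x m| = Real.sqrt ((mderiv α f x m)^2) := (Real.sqrt_sq_eq_abs _).symm
    _ ≤ H x := Real.sqrt_le_sqrt
        (Finset.single_le_sum (f := fun i => mderiv α f x i ^ 2)
          (fun i _ => sq_nonneg _) (Finset.mem_univ m))
    _ ≤ ⨆ y, H y := le_ciSup hbdd x
    _ ≤ wInf k f := by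
        exact Finset.le_sup'
          (fun β => ⨆ x : Fin 3 → ℝ, Real.sqrt (∑ i, (mderiv β f x i)^2)) hα

/- ===== specific bounds ===== -/

lemma absD1_le {ξ} (hξ : ContDiff ℝ (⊤:ℕ∞) ξ) (hp : Periodic3 ξ) (k j : Fin 3) (x : Fin 3 → ℝ) :
    |D k (fun y => ξ y j) x| ≤ wInf 3 ξ := by
  rw [← pd_comp hξ k x j, ← mderiv_single k]
  exact abs_mderiv_le_wInf hξ hp (single_mem_midx k 3 (by norm_num)) x j

lemma absD2_le {ξ} (hξ : ContDiff ℝ (⊤:ℕ∞) ξ) (hp : Periodic3 ξ) (k l j : Fin 3) (x : Fin 3 → ℝ) :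
    |D k (D l (fun y => ξ y j)) x| ≤ wInf 3 ξ := by
  rcases le_total k l with h | h
  · rw [← pd2_comp hξ k l x j, ← mderiv_pair k l h]
    exact abs_mderiv_le_wInf hξ hp (pair_mem_midx k l 3 (by norm_num)) x j
  · rw [D_swap (contDiff_pi.mp hξ j) k l, ← pd2_comp hξ l k x j, ← mderiv_pair l k h]
    exact abs_mderiv_le_wInf hξ hp (pair_mem_midx l k 3 (by norm_num)) x j

lemma absD3_le {ξ} (hξ : ContDiff ℝ (⊤:ℕ∞) ξ) (hp : Periodic3 ξ) (k i j : Fin 3) (x : Fin 3 → ℝ) :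
    |D k (D k (D i (fun y => ξ y j))) x| ≤ wInf 3 ξ := by
  rcases le_total k i with h | h
  · rw [← pd3_comp hξ k k i x j, ← mderiv_triple k k i le_rfl h]
    exact abs_mderiv_le_wInf hξ hp (triple_mem_midx k k i) x j
  · rw [D_swap3 (contDiff_pi.mp hξ j) k i, ← pd3_comp hξ i k k x j,
      ← mderiv_triple i k k h le_rfl]
    exact abs_mderiv_le_wInf hξ hp (triple_mem_midx i k k) x j

noncomputable def G2 (φ : (Fin 3 → ℝ) → (Fin 3 → ℝ)) (x : Fin 3 → ℝ) : ℝ :=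
  ∑ α ∈ midx 2, ∑ i, (mderiv α φ x i)^2

lemma G2_nonneg (φ) (x) : 0 ≤ G2 φ x :=
  Finset.sum_nonneg fun _ _ => Finset.sum_nonneg fun _ _ => sq_nonneg _

lemma absP {φ} {α : Fin 3 → ℕ} (hα : α ∈ midx 2) (x : Fin 3 → ℝ) (m : Fin 3) :
    |mderiv α φ x m| ≤ Real.sqrt (G2 φ x) := by
  have h1 : (mderiv α φ x m)^2 ≤ G2 φ x :=
    le_trans (Finset.single_le_sum (f := fun i => (mderiv α φ x i)^2)
        (fun i _ => sq_nonneg _) (Finset.mem_univ m))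
      (Finset.single_le_sum (f := fun β => ∑ i, (mderiv β φ x i)^2)
        (fun β _ => Finset.sum_nonneg fun i _ => sq_nonneg _) hα)
  calc |mderiv α φ x m| = Real.sqrt ((mderiv α φ x m)^2) := (Real.sqrt_sq_eq_abs _).symm
    _ ≤ Real.sqrt (G2 φ x) := Real.sqrt_le_sqrt h1

lemma absP0 {φ} (x : Fin 3 → ℝ) (j : Fin 3) : |φ x j| ≤ Real.sqrt (G2 φ x) :=
  absP (α := fun _ => 0) (zero_mem_midx 2) x j

lemma absP1 {φ : (Fin 3 → ℝ) → (Fin 3 → ℝ)} (hφ : ContDiff ℝ (⊤:ℕ∞) φ) (k i : Fin 3) (x : Fin 3 → ℝ) :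
    |D k (fun y => φ y i) x| ≤ Real.sqrt (G2 φ x) := by
  rw [← pd_comp hφ k x i, ← mderiv_single k]
  exact absP (single_mem_midx k 2 (by norm_num)) x i

lemma absP2 {φ : (Fin 3 → ℝ) → (Fin 3 → ℝ)} (hφ : ContDiff ℝ (⊤:ℕ∞) φ) (k l i : Fin 3) (x : Fin 3 → ℝ) :
    |D k (D l (fun y => φ y i)) x| ≤ Real.sqrt (G2 φ x) := by
  rcases le_total k l with h | h
  · rw [← pd2_comp hφ k l x i, ← mderiv_pair k l h]
    exact absP (pair_mem_midx k l 2 (by norm_num)) x i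
  · rw [D_swap (contDiff_pi.mp hφ i) k l, ← pd2_comp hφ l k x i, ← mderiv_pair l k h]
    exact absP (pair_mem_midx l k 2 (by norm_num)) x i

/- ===== smoothness of the operators ===== -/

lemma transport_smooth {ξ φ} (hξ : ContDiff ℝ (⊤:ℕ∞) ξ) (hφ : ContDiff ℝ (⊤:ℕ∞) φ) :
    ContDiff ℝ (⊤:ℕ∞) (transport ξ φ) := by
  refine contDiff_pi.mpr fun i => ?_
  exact ContDiff.sum fun j _ =>
    (contDiff_pi.mp hξ j).mul (contDiff_pi.mp (pd_contDiff hφ j) i)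

lemma tOp_smooth {ξ φ} (hξ : ContDiff ℝ (⊤:ℕ∞) ξ) (hφ : ContDiff ℝ (⊤:ℕ∞) φ) :
    ContDiff ℝ (⊤:ℕ∞) (tOp ξ φ) := by
  refine contDiff_pi.mpr fun i => ?_
  exact ContDiff.sum fun j _ =>
    (contDiff_pi.mp hφ j).mul (contDiff_pi.mp (pd_contDiff hξ i) j)

lemma bOp_smooth {ξ φ} (hξ : ContDiff ℝ (⊤:ℕ∞) ξ) (hφ : ContDiff ℝ (⊤:ℕ∞) φ) :
    ContDiff ℝ (⊤:ℕ∞) (bOp ξ φ) :=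
  (transport_smooth hξ hφ).add (tOp_smooth hξ hφ)

lemma lap_smooth {f} (hf : ContDiff ℝ (⊤:ℕ∞) f) : ContDiff ℝ (⊤:ℕ∞) (lap f) := by
  refine contDiff_pi.mpr fun i => ?_
  have h : (fun x => lap f x i) = fun x => ∑ j, pd j (pd j f) x i :=
    funext fun x => Finset.sum_apply i Finset.univ _
  rw [h]
  exact ContDiff.sum fun j _ => contDiff_pi.mp (pd_contDiff (pd_contDiff hf j) j) i

lemma lap_comp {f} (hf : ContDiff ℝ (⊤:ℕ∞) f) (x : Fin 3 → ℝ) (i : Fin 3) :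
    lap f x i = ∑ k, D k (D k (fun y => f y i)) x := by
  have h1 : lap f x i = ∑ k, pd k (pd k f) x i := Finset.sum_apply i Finset.univ _
  rw [h1]
  exact Finset.sum_congr rfl fun k _ => pd2_comp hf k k x i

/- ===== the commutator identity ===== -/

lemma D2_mul2 {a b c d : (Fin 3 → ℝ) → ℝ} (ha : ContDiff ℝ (⊤:ℕ∞) a) (hb : ContDiff ℝ (⊤:ℕ∞) b)
    (hc : ContDiff ℝ (⊤:ℕ∞) c) (hd : ContDiff ℝ (⊤:ℕ∞) d) (k : Fin 3) (x : Fin 3 → ℝ) :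
    D k (D k (fun y => a y * b y + c y * d y)) x
      = (D k (D k a) x * b x + 2 * (D k a x * D k b x) + a x * D k (D k b) x)
      + (D k (D k c) x * d x + 2 * (D k c x * D k d x) + c x * D k (D k d) x) := by
  have h1 : D k (fun y => a y * b y + c y * d y)
      = fun y => (D k a y * b y + a y * D k b y) + (D k c y * d y + c y * D k d y) := by
    funext y
    rw [D_add (ha.mul hb) (hc.mul hd) k y, D_mul ha hb k y, D_mul hc hd k y]
  rw [h1]
  have e1 : D k (fun y => (D k a y * b y + a y * D k b y) + (D k c y * d y + c y * D k d y)) x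
      = D k (fun y => D k a y * b y + a y * D k b y) x
        + D k (fun y => D k c y * d y + c y * D k d y) x :=
    D_add (((D_smooth ha k).mul hb).add (ha.mul (D_smooth hb k)))
          (((D_smooth hc k).mul hd).add (hc.mul (D_smooth hd k))) k x
  rw [e1,
    D_add ((D_smooth ha k).mul hb) (ha.mul (D_smooth hb k)) k x,
    D_add ((D_smooth hc k).mul hd) (hc.mul (D_smooth hd k)) k x,
    D_mul (D_smooth ha k) hb k x, D_mul ha (D_smooth hb k) k x,
    D_mul (D_smooth hc k) hd k x, D_mul hc (D_smooth hd k) k x]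
  ring

lemma key_identity {ξ φ : (Fin 3 → ℝ) → (Fin 3 → ℝ)} (hξ : ContDiff ℝ (⊤:ℕ∞) ξ)
    (hφ : ContDiff ℝ (⊤:ℕ∞) φ) (x : Fin 3 → ℝ) (i : Fin 3) :
    lap (bOp ξ φ) x i - bOp ξ (lap φ) x i
      = ∑ k : Fin 3, ∑ j : Fin 3,
        (D k (D k (fun y => ξ y j)) x * D j (fun y => φ y i) x
         + 2 * (D k (fun y => ξ y j) x * D k (D j (fun y => φ y i)) x)
         + 2 * (D k (fun y => φ y j) x * D k (D i (fun y => ξ y j)) x)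
         + φ x j * D k (D k (D i (fun y => ξ y j))) x) := by
  have hΞ : ∀ j, ContDiff ℝ (⊤:ℕ∞) (fun y => ξ y j) := contDiff_pi.mp hξ
  have hΦ : ∀ m, ContDiff ℝ (⊤:ℕ∞) (fun y => φ y m) := contDiff_pi.mp hφ
  have smT : ∀ j, ContDiff ℝ (⊤:ℕ∞)
      (fun y => ξ y j * D j (fun y' => φ y' i) y + φ y j * D i (fun y' => ξ y' j) y) :=
    fun j => ((hΞ j).mul (D_smooth (hΦ i) j)).add ((hΦ j).mul (D_smooth (hΞ j) i))
  have hB : (fun y => bOp ξ φ y i)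
      = fun y => ∑ j, (ξ y j * D j (fun y' => φ y' i) y + φ y j * D i (fun y' => ξ y' j) y) := by
    funext y
    have h0 : bOp ξ φ y i = (∑ j, ξ y j * pd j φ y i) + (∑ j, φ y j * pd i ξ y j) := rfl
    rw [h0, ← Finset.sum_add_distrib]
    refine Finset.sum_congr rfl fun j _ => ?_
    rw [pd_comp hφ j y i, pd_comp hξ i y j]
  have hexp : ∀ k, D k (D k (fun y => ∑ j,
        (ξ y j * D j (fun y' => φ y' i) y + φ y j * D i (fun y' => ξ y' j) y))) x
      = ∑ j, D k (D k (fun y =>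
          ξ y j * D j (fun y' => φ y' i) y + φ y j * D i (fun y' => ξ y' j) y)) x := by
    intro k
    have hin : D k (fun y => ∑ j,
          (ξ y j * D j (fun y' => φ y' i) y + φ y j * D i (fun y' => ξ y' j) y))
        = fun y0 => ∑ j, D k (fun y =>
            ξ y j * D j (fun y' => φ y' i) y + φ y j * D i (fun y' => ξ y' j) y) y0 :=
      funext fun y0 => D_sum Finset.univ _ (fun j _ => smT j) k y0
    rw [hin]
    exact D_sum Finset.univ _ (fun j _ => D_smooth (smT j) k) k x
  have hlapFinal : lap (bOp ξ φ) x i = ∑ k : Fin 3, ∑ j : Fin 3,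
      (D k (D k (fun y => ξ y j)) x * D j (fun y => φ y i) x
       + 2 * (D k (fun y => ξ y j) x * D k (D j (fun y => φ y i)) x)
       + ξ x j * D j (D k (D k (fun y => φ y i))) x
       + D k (D k (fun y => φ y j)) x * D i (fun y => ξ y j) x
       + 2 * (D k (fun y => φ y j) x * D k (D i (fun y => ξ y j)) x)
       + φ x j * D k (D k (D i (fun y => ξ y j))) x) := by
    rw [lap_comp (bOp_smooth hξ hφ) x i, hB]
    refine Finset.sum_congr rfl fun k _ => ?_
    rw [hexp k]
    refine Finset.sum_congr rfl fun j _ => ?_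
    rw [D2_mul2 (hΞ j) (D_smooth (hΦ i) j) (hΦ j) (D_smooth (hΞ j) i) k x,
      D_swap3 (hΦ i) k j]
    ring
  have hbop2 : bOp ξ (lap φ) x i = ∑ k : Fin 3, ∑ j : Fin 3,
      (ξ x j * D j (D k (D k (fun y => φ y i))) x
       + D k (D k (fun y => φ y j)) x * D i (fun y => ξ y j) x) := by
    have h0 : bOp ξ (lap φ) x i
        = (∑ j, ξ x j * pd j (lap φ) x i) + (∑ j, lap φ x j * pd i ξ x j) := rfl
    have h1 : ∀ j, pd j (lap φ) x i = ∑ k, D j (D k (D k (fun y => φ y i))) x := by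
      intro j
      rw [pd_comp (lap_smooth hφ) j x i]
      have h2 : (fun y => lap φ y i) = fun y => ∑ k, D k (D k (fun y' => φ y' i)) y :=
        funext fun y => lap_comp hφ y i
      rw [h2]
      exact D_sum Finset.univ _ (fun k _ => D_smooth (D_smooth (hΦ i) k) k) j x
    have h3 : ∀ j, lap φ x j = ∑ k, D k (D k (fun y => φ y j)) x := fun j => lap_comp hφ x j
    rw [h0]
    rw [show (∑ j, ξ x j * pd j (lap φ) x i) + (∑ j, lap φ x j * pd i ξ x j)
        = ∑ j : Fin 3, ∑ k : Fin 3,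
          (ξ x j * D j (D k (D k (fun y => φ y i))) x
           + D k (D k (fun y => φ y j)) x * D i (fun y => ξ y j) x) from ?_]
    · exact Finset.sum_comm
    rw [← Finset.sum_add_distrib]
    refine Finset.sum_congr rfl fun j _ => ?_
    rw [h1 j, h3 j, pd_comp hξ i x j, Finset.mul_sum, Finset.sum_mul,
      ← Finset.sum_add_distrib]
  rw [hlapFinal, hbop2, ← Finset.sum_sub_distrib]
  refine Finset.sum_congr rfl fun k _ => ?_
  rw [← Finset.sum_sub_distrib]
  refine Finset.sum_congr rfl fun j _ => ?_
  ring

/- ===== pointwise bound ===== -/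

lemma abs_comb {a b c d m : ℝ} (ha : |a| ≤ m) (hb : |b| ≤ m) (hc : |c| ≤ m) (hd : |d| ≤ m) :
    |a + 2*b + 2*c + d| ≤ 6*m := by
  have h1 := abs_add_le (a + 2*b + 2*c) d
  have h2 := abs_add_le (a + 2*b) (2*c)
  have h3 := abs_add_le a (2*b)
  have hb2 : |2*b| = 2*|b| := by rw [abs_mul]; norm_num
  have hc2 : |2*c| = 2*|c| := by rw [abs_mul]; norm_num
  linarith

lemma pointwise_bound {ξ φ : (Fin 3 → ℝ) → (Fin 3 → ℝ)} (hξ : ContDiff ℝ (⊤:ℕ∞) ξ)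
    (hφ : ContDiff ℝ (⊤:ℕ∞) φ) (hpξ : Periodic3 ξ) (x : Fin 3 → ℝ) (i : Fin 3) :
    |lap (bOp ξ φ) x i - bOp ξ (lap φ) x i| ≤ 54 * wInf 3 ξ * Real.sqrt (G2 φ x) := by
  have hM : 0 ≤ wInf 3 ξ := wInf_nonneg 3 ξ
  rw [key_identity hξ hφ x i]
  have hterm : ∀ k j : Fin 3,
      |D k (D k (fun y => ξ y j)) x * D j (fun y => φ y i) x
       + 2 * (D k (fun y => ξ y j) x * D k (D j (fun y => φ y i)) x)
       + 2 * (D k (fun y => φ y j) x * D k (D i (fun y => ξ y j)) x)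
       + φ x j * D k (D k (D i (fun y => ξ y j))) x|
      ≤ 6 * (wInf 3 ξ * Real.sqrt (G2 φ x)) := by
    intro k j
    refine abs_comb ?_ ?_ ?_ ?_
    · rw [abs_mul]
      exact mul_le_mul (absD2_le hξ hpξ k k j x) (absP1 hφ j i x) (abs_nonneg _) hM
    · rw [abs_mul]
      exact mul_le_mul (absD1_le hξ hpξ k j x) (absP2 hφ k j i x) (abs_nonneg _) hM
    · rw [abs_mul, mul_comm]
      exact mul_le_mul (absD2_le hξ hpξ k i j x) (absP1 hφ k j x) (abs_nonneg _) hM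
    · rw [abs_mul, mul_comm]
      exact mul_le_mul (absD3_le hξ hpξ k i j x) (absP0 x j) (abs_nonneg _) hM
  refine le_trans (Finset.abs_sum_le_sum_abs _ _) ?_
  refine le_trans (Finset.sum_le_sum fun k _ => Finset.abs_sum_le_sum_abs _ _) ?_
  refine le_trans (Finset.sum_le_sum fun k (_ : k ∈ Finset.univ) =>
    Finset.sum_le_sum fun j (_ : j ∈ Finset.univ) => hterm k j) ?_
  refine le_of_eq ?_
  simp only [Finset.sum_const, Finset.card_univ, Fintype.card_fin, nsmul_eq_mul]
  push_cast
  ring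

/- ===== integration and the main theorem ===== -/

/-- There is a universal constant `c > 0` such that for all smooth `ℤ³`-periodic
`ξ, φ : ℝ³ → ℝ³`, the commutator of the componentwise Laplacian `Δ` with the SALT
operator `B_ξ = L_ξ + T_ξ` is of second order:
`‖Δ(B_ξ φ) − B_ξ(Δ φ)‖_{L²} ≤ c ‖ξ‖_{W^{3,∞}} ‖φ‖_{W^{2,2}}`. -/
theorem laplacian_salt_commutator_second_order :
    ∃ c : ℝ, 0 < c ∧ ∀ ξ φ : (Fin 3 → ℝ) → (Fin 3 → ℝ),
      ContDiff ℝ (⊤ : ℕ∞) ξ → ContDiff ℝ (⊤ : ℕ∞) φ → Periodic3 ξ → Periodic3 φ →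
      wNorm2 0 (fun x => lap (bOp ξ φ) x - bOp ξ (lap φ) x) ≤
        c * wInf 3 ξ * wNorm2 2 φ := by
  refine ⟨100, by norm_num, ?_⟩
  intro ξ φ hξω hφω hpξ hpφ
  have hξ : ContDiff ℝ (⊤:ℕ∞) ξ := hξω.of_le (by simp)
  have hφ : ContDiff ℝ (⊤:ℕ∞) φ := hφω.of_le (by simp)
  set M := wInf 3 ξ with hMdef
  have hM : 0 ≤ M := wInf_nonneg 3 ξ
  set F : (Fin 3 → ℝ) → (Fin 3 → ℝ) := fun x => lap (bOp ξ φ) x - bOp ξ (lap φ) x with hFdef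
  have hFsmooth : ContDiff ℝ (⊤:ℕ∞) F :=
    (lap_smooth (bOp_smooth hξ hφ)).sub (bOp_smooth hξ (lap_smooth hφ))
  have hFc : Continuous F := hFsmooth.continuous
  -- pointwise bound on the squared norm
  have hptF : ∀ x, ∑ i, (F x i)^2 ≤ 10000 * M^2 * G2 φ x := by
    intro x
    have hbd : ∀ i : Fin 3, (F x i)^2 ≤ (54 * M * Real.sqrt (G2 φ x))^2 := by
      intro i
      have h1 : |F x i| ≤ 54 * M * Real.sqrt (G2 φ x) := by
        have hFi : F x i = lap (bOp ξ φ) x i - bOp ξ (lap φ) x i := rfl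
        rw [hFi]
        exact pointwise_bound hξ hφ hpξ x i
      calc (F x i)^2 = |F x i|^2 := (sq_abs _).symm
        _ ≤ (54 * M * Real.sqrt (G2 φ x))^2 := by
            exact pow_le_pow_left₀ (abs_nonneg _) h1 2
    have hsum : ∑ i, (F x i)^2 ≤ 3 * (54 * M * Real.sqrt (G2 φ x))^2 := by
      refine le_trans (Finset.sum_le_sum fun i (_ : i ∈ Finset.univ) => hbd i) ?_
      refine le_of_eq ?_
      simp only [Finset.sum_const, Finset.card_univ, Fintype.card_fin, nsmul_eq_mul]
      push_cast
      ring
    have hsq : (Real.sqrt (G2 φ x))^2 = G2 φ x := Real.sq_sqrt (G2_nonneg φ x)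
    have hexp : 3 * (54 * M * Real.sqrt (G2 φ x))^2 = 8748 * (M^2 * G2 φ x) := by
      have h5 : 3 * (54 * M * Real.sqrt (G2 φ x))^2
          = 8748 * M^2 * (Real.sqrt (G2 φ x))^2 := by ring
      rw [h5, hsq]; ring
    have hnn : 0 ≤ M^2 * G2 φ x := mul_nonneg (sq_nonneg M) (G2_nonneg φ x)
    calc ∑ i, (F x i)^2 ≤ 3 * (54 * M * Real.sqrt (G2 φ x))^2 := hsum
      _ = 8748 * (M^2 * G2 φ x) := hexp
      _ ≤ 10000 * M^2 * G2 φ x := by nlinarith [hnn]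
  -- integrability
  have hContG : Continuous (fun x => G2 φ x) := by
    refine continuous_finset_sum _ fun α _ => continuous_finset_sum _ fun i _ => ?_
    exact ((continuous_apply i).comp (mderiv_smooth hφ α).continuous).pow 2
  have hContF2 : Continuous (fun x => ∑ i, (F x i)^2) :=
    continuous_finset_sum _ fun i _ => ((continuous_apply i).comp hFc).pow 2
  have hi1 : IntegrableOn (fun x => ∑ i, (F x i)^2) (Set.Icc 0 1) volume :=
    hContF2.continuousOn.integrableOn_compact isCompact_Icc
  have hi2 : IntegrableOn (fun x => 10000 * M^2 * G2 φ x) (Set.Icc 0 1) volume :=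
    (continuous_const.mul hContG).continuousOn.integrableOn_compact isCompact_Icc
  have hIntMono : (∫ x in Set.Icc (0 : Fin 3 → ℝ) 1, ∑ i, (F x i)^2)
      ≤ ∫ x in Set.Icc (0 : Fin 3 → ℝ) 1, 10000 * M^2 * G2 φ x :=
    setIntegral_mono_on hi1 hi2 measurableSet_Icc (fun x _ => hptF x)
  have hG2int : (∫ x in Set.Icc (0 : Fin 3 → ℝ) 1, G2 φ x) = sobSq 2 φ := by
    unfold G2 sobSq
    exact integral_finset_sum (midx 2) fun α _ =>
      ((continuous_finset_sum _ fun i _ =>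
        ((continuous_apply i).comp (mderiv_smooth hφ α).continuous).pow 2)).continuousOn.integrableOn_compact
        isCompact_Icc
  have hfinal : sobSq 0 F ≤ 10000 * M^2 * sobSq 2 φ := by
    have h0 : sobSq 0 F = ∫ x in Set.Icc (0 : Fin 3 → ℝ) 1, ∑ i, (F x i)^2 := by
      unfold sobSq
      rw [midx_zero, Finset.sum_singleton]
      rfl
    rw [h0]
    calc (∫ x in Set.Icc (0 : Fin 3 → ℝ) 1, ∑ i, (F x i)^2)
        ≤ ∫ x in Set.Icc (0 : Fin 3 → ℝ) 1, 10000 * M^2 * G2 φ x := hIntMono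
      _ = 10000 * M^2 * ∫ x in Set.Icc (0 : Fin 3 → ℝ) 1, G2 φ x := by
          rw [MeasureTheory.integral_const_mul]
      _ = 10000 * M^2 * sobSq 2 φ := by rw [hG2int]
  show wNorm2 0 F ≤ 100 * M * wNorm2 2 φ
  unfold wNorm2
  calc Real.sqrt (sobSq 0 F) ≤ Real.sqrt (10000 * M^2 * sobSq 2 φ) := Real.sqrt_le_sqrt hfinal
    _ = 100 * M * Real.sqrt (sobSq 2 φ) := by
        rw [show 10000 * M^2 * sobSq 2 φ = (100*M)^2 * sobSq 2 φ by ring,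
          Real.sqrt_mul (sq_nonneg _), Real.sqrt_sq (by positivity)]
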